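/- arXiv:1403.0425 — 4 statements merged into one kernel-verified Lean document; each statement's English description precedes it below -/
import Mathlib

section
/- The 4×4 matrix R(x) with entries R₁₁ = R₄₄ = sinh(x+γ), R₂₂ = R₃₃ = sinh(γ), R₂₃ = R₃₂ = sinh(x), and all other entries zero, satisfies the Yang–Baxter equation (R(x) ⊗ 1)(1 ⊗ R(x+y))(R(y) ⊗ 1) = (1 ⊗ R(y))(R(x+y) ⊗ 1)(1 ⊗ R(x)) as an identity of 8×8 matrices, for all complex x, y and fixed complex γ. -/
open Complex

/-- The six-vertex `R`-matrix on `ℂ² ⊗ ℂ²`, with basis of `ℂ² ⊗ ℂ²` indexed by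
`Fin 2 × Fin 2` (ordering `(0,0),(0,1),(1,0),(1,1)` corresponding to `1,2,3,4`):
entries `a(x) = sinh(x+γ)` at `(1,1)` and `(4,4)`, `c(x) = sinh γ` at `(2,2)` and `(3,3)`,
and `b(x) = sinh x` at `(2,3)` and `(3,2)`; all other entries vanish. -/
noncomputable def sixVertexR (γ x : ℂ) :
    Matrix (Fin 2 × Fin 2) (Fin 2 × Fin 2) ℂ := fun p q =>
  if p = q then (if p.1 = p.2 then Complex.sinh (x + γ) else Complex.sinh γ)
  else (if p.1 = q.2 ∧ p.2 = q.1 then Complex.sinh x else 0)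

/-- `R(x) ⊗ 1` acting on `ℂ² ⊗ ℂ² ⊗ ℂ²` (the `R`-matrix on the first two factors). -/
noncomputable def sixVertexR12 (γ x : ℂ) :
    Matrix (Fin 2 × Fin 2 × Fin 2) (Fin 2 × Fin 2 × Fin 2) ℂ := fun p q =>
  sixVertexR γ x (p.1, p.2.1) (q.1, q.2.1) * (if p.2.2 = q.2.2 then 1 else 0)

/-- `1 ⊗ R(x)` acting on `ℂ² ⊗ ℂ² ⊗ ℂ²` (the `R`-matrix on the last two factors). -/
noncomputable def sixVertexR23 (γ x : ℂ) :
    Matrix (Fin 2 × Fin 2 × Fin 2) (Fin 2 × Fin 2 × Fin 2) ℂ := fun p q =>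
  (if p.1 = q.1 then 1 else 0) * sixVertexR γ x (p.2.1, p.2.2) (q.2.1, q.2.2)

/-!
Charge conservation (the ice rule) reduces the Yang–Baxter equation for six-vertex matrices with
weights `(aᵢ, bᵢ, cᵢ)` entry by entry to three cubic relations between the weights of the three
factors. For `a = sinh (x + γ)`, `b = sinh x`, `c = sinh γ` each relation is `sinh γ` times an
instance of the three-term identity
`sinh (a + b) sinh (c + b) = sinh a sinh c + sinh b sinh (a + c + b)`,
which is `cosh² b - sinh² b = 1` once the addition formulas are expanded.
-/

theorem Complex.sinh_add_mul_sinh_add (a b c : ℂ) :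
    sinh (a + b) * sinh (c + b) = sinh a * sinh c + sinh b * sinh (a + c + b) := by
  simp only [sinh_add, cosh_add]
  linear_combination sinh a * sinh c * cosh_sq b

section SixVertex

variable {R : Type*}

def sixVertex [Zero R] (a b c : R) : Matrix (Fin 2 × Fin 2) (Fin 2 × Fin 2) R := fun p q =>
  if p = q then (if p.1 = p.2 then a else c)
  else (if p.1 = q.2 ∧ p.2 = q.1 then b else 0)

def onFirstTwo [MulZeroOneClass R] (M : Matrix (Fin 2 × Fin 2) (Fin 2 × Fin 2) R) :
    Matrix (Fin 2 × Fin 2 × Fin 2) (Fin 2 × Fin 2 × Fin 2) R := fun p q =>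
  M (p.1, p.2.1) (q.1, q.2.1) * (if p.2.2 = q.2.2 then 1 else 0)

def onLastTwo [MulZeroOneClass R] (M : Matrix (Fin 2 × Fin 2) (Fin 2 × Fin 2) R) :
    Matrix (Fin 2 × Fin 2 × Fin 2) (Fin 2 × Fin 2 × Fin 2) R := fun p q =>
  (if p.1 = q.1 then 1 else 0) * M (p.2.1, p.2.2) (q.2.1, q.2.2)

theorem sixVertex_yangBaxter [CommRing R] {a₁ b₁ c₁ a₂ b₂ c₂ a₃ b₃ c₃ : R}
    (h₁ : a₁ * a₃ * c₂ = a₂ * c₁ * c₃ + b₁ * b₃ * c₂)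
    (h₂ : a₁ * b₂ * c₃ = a₂ * b₁ * c₃ + b₃ * c₁ * c₂)
    (h₃ : a₃ * b₂ * c₁ = a₂ * b₃ * c₁ + b₁ * c₂ * c₃) :
    onFirstTwo (sixVertex a₁ b₁ c₁) * onLastTwo (sixVertex a₂ b₂ c₂) *
        onFirstTwo (sixVertex a₃ b₃ c₃) =
      onLastTwo (sixVertex a₃ b₃ c₃) * onFirstTwo (sixVertex a₂ b₂ c₂) *
        onLastTwo (sixVertex a₁ b₁ c₁) := by
  rw [← Matrix.ext_iff]
  simp only [Prod.forall, Fin.forall_fin_two, Matrix.mul_apply, Fintype.sum_prod_type,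
    Fin.sum_univ_two, onFirstTwo, onLastTwo, sixVertex, Prod.mk.injEq, and_self, ↓reduceIte,
    mul_one, one_mul, Fin.isValue, zero_ne_one, mul_zero, one_ne_zero, and_false, add_zero,
    and_true, zero_mul, zero_add, true_and]
  -- each remaining entry is trivial or one of `h₁`, `h₂`, `h₃` up to sign and reordering
  and_intros <;> grind

end SixVertex

theorem sixVertexR_eq_sixVertex (γ x : ℂ) :
    sixVertexR γ x = sixVertex (sinh (x + γ)) (sinh x) (sinh γ) := rfl

theorem sixVertexR12_eq_onFirstTwo (γ x : ℂ) : sixVertexR12 γ x = onFirstTwo (sixVertexR γ x) :=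
  rfl

theorem sixVertexR23_eq_onLastTwo (γ x : ℂ) : sixVertexR23 γ x = onLastTwo (sixVertexR γ x) :=
  rfl

/-- The six-vertex `R`-matrix satisfies the Yang–Baxter equation
`(R(x) ⊗ 1)(1 ⊗ R(x+y))(R(y) ⊗ 1) = (1 ⊗ R(y))(R(x+y) ⊗ 1)(1 ⊗ R(x))`
as an identity of `8 × 8` matrices, for all complex `x, y` and fixed complex `γ`. -/
theorem sixVertexR_yang_baxter (γ x y : ℂ) :
    sixVertexR12 γ x * sixVertexR23 γ (x + y) * sixVertexR12 γ y
      = sixVertexR23 γ y * sixVertexR12 γ (x + y) * sixVertexR23 γ x := by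
  simp only [sixVertexR12_eq_onFirstTwo, sixVertexR23_eq_onLastTwo, sixVertexR_eq_sixVertex]
  exact sixVertex_yangBaxter
    (by linear_combination (norm := ring_nf) sinh γ * sinh_add_mul_sinh_add x γ y)
    (by linear_combination (norm := ring_nf) sinh γ * sinh_add_mul_sinh_add γ x y)
    (by linear_combination (norm := ring_nf) sinh γ * sinh_add_mul_sinh_add γ y x)
end

section
/- Suppose operators A(x), B(x) on a vector space satisfy, for all x₁ ≠ x₂ (with b(x₂−x₁) ≠ 0), the relation A(x₁)B(x₂) = (a(x₂−x₁)/b(x₂−x₁)) B(x₂)A(x₁) − (c(x₂−x₁)/b(x₂−x₁)) B(x₁)A(x₂), and B(x₁)B(x₂) = B(x₂)B(x₁). Then for distinct λ₀, λ₁, ..., λₙ one has A(λ₀)·B(λ₁)···B(λₙ) = (∏_{j=1}^n a(λⱼ−λ₀)/b(λⱼ−λ₀)) B(λ₁)···B(λₙ)A(λ₀) − Σ_{i=1}^n (c(λᵢ−λ₀)/b(λᵢ−λ₀)) (∏_{j≠i} a(λⱼ−λᵢ)/b(λⱼ−λᵢ)) B(λ₀)(∏_{j≠i} B(λⱼ))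 A(λᵢ). -/
open Finset Complex

/-!
Induction on the set of spectral parameters. Moving `A(x₀)` past the first factor `B(λₖ)` by the
two-point relation leaves `A(x₀)` and `A(λₖ)` in front of the remaining product, to which the
induction hypothesis applies. The two contributions to each term with `A(λᵢ)`, `i ≠ k`, recombine
into the claimed coefficient by the addition formula
`sinh (v - u + γ) sinh v = sinh (v + γ) sinh (v - u) + sinh γ sinh u`.
-/

theorem sinh_sub_add_mul_sinh (γ u v : ℂ) :
    sinh (v - u + γ) * sinh v = sinh (v + γ) * sinh (v - u) + sinh γ * sinh u := by
  simp only [sinh_add, sinh_sub, cosh_sub]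
  linear_combination sinh γ * sinh u * cosh_sq_sub_sinh_sq v

noncomputable def aOverB (γ x : ℂ) : ℂ := sinh (x + γ) / sinh x

noncomputable def cOverB (γ x : ℂ) : ℂ := sinh γ / sinh x

theorem cOverB_mul_aOverB_sub {γ x₀ x y : ℂ} (hx : sinh (x - x₀) ≠ 0)
    (hy : sinh (y - x₀) ≠ 0) (hxy : sinh (y - x) ≠ 0) :
    cOverB γ (x - x₀) * aOverB γ (y - x)
      = aOverB γ (y - x₀) * cOverB γ (x - x₀) - cOverB γ (y - x₀) * cOverB γ (x - y) := by
  have hyx : y - x = (y - x₀) - (x - x₀) := by ring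
  rw [hyx] at hxy ⊢
  rw [cOverB, cOverB, cOverB, aOverB, aOverB, show x - y = -((y - x₀) - (x - x₀)) by ring,
    sinh_neg]
  field_simp
  linear_combination sinh γ * sinh_sub_add_mul_sinh γ (x - x₀) (y - x₀)

section Exchange

variable {R : Type*} [Ring R] (γ : ℂ) (A : ℂ → R) {B : ℂ → R}
  (hBB : ∀ x y, Commute (B x) (B y)) {ι : Type*} [DecidableEq ι] (l : ι → ℂ)

def prodB (s : Finset ι) : R :=
  s.noncommProd (fun j => B (l j)) fun p _ q _ _ => hBB (l p) (l q)

theorem prodB_insert {s : Finset ι} {k : ι} (hk : k ∉ s) :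
    prodB hBB l (insert k s) = B (l k) * prodB hBB l s :=
  noncommProd_insert_of_notMem _ _ _ _ hk

variable [Algebra ℂ R]

noncomputable def exchangeTerm (s : Finset ι) (x₀ : ℂ) (i : ι) : R :=
  (cOverB γ (l i - x₀) * ∏ j ∈ s.erase i, aOverB γ (l j - l i)) •
    (B x₀ * prodB hBB l (s.erase i) * A (l i))

theorem exchangeTerm_insert {t : Finset ι} {k i : ι} (hk : k ∉ t) (hi : i ∈ t) {x₀ : ℂ}
    (hi0 : sinh (l i - x₀) ≠ 0) (hk0 : sinh (l k - x₀) ≠ 0) (hki : sinh (l k - l i) ≠ 0) :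
    exchangeTerm γ A hBB l (insert k t) x₀ i
      = aOverB γ (l k - x₀) • (B (l k) * exchangeTerm γ A hBB l t x₀ i)
        - cOverB γ (l k - x₀) • (B x₀ * exchangeTerm γ A hBB l t (l k) i) := by
  have hk' : k ∉ t.erase i := fun h => hk (mem_of_mem_erase h)
  have hBB' : B (l k) * (B x₀ * prodB hBB l (t.erase i) * A (l i))
      = B x₀ * (B (l k) * prodB hBB l (t.erase i) * A (l i)) := by
    simp only [← mul_assoc, (hBB (l k) x₀).eq]
  rw [exchangeTerm, exchangeTerm, exchangeTerm,
    erase_insert_of_ne (ne_of_mem_of_not_mem hi hk).symm, prod_insert hk',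
    prodB_insert hBB l hk', mul_smul_comm, mul_smul_comm, hBB', smul_smul, smul_smul, ← sub_smul]
  congr 1
  · linear_combination (∏ j ∈ t.erase i, aOverB γ (l j - l i)) *
      cOverB_mul_aOverB_sub (γ := γ) hi0 hk0 hki
  · simp only [mul_assoc]

theorem mul_prodB_eq_sub_sum_exchangeTerm
    (hAB : ∀ x y, sinh (y - x) ≠ 0 →
      A x * B y = aOverB γ (y - x) • (B y * A x) - cOverB γ (y - x) • (B x * A y))
    (s : Finset ι) (x₀ : ℂ) (hb0 : ∀ j ∈ s, sinh (l j - x₀) ≠ 0)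
    (hsep : (s : Set ι).Pairwise fun i j => sinh (l j - l i) ≠ 0) :
    A x₀ * prodB hBB l s
      = (∏ j ∈ s, aOverB γ (l j - x₀)) • (prodB hBB l s * A x₀)
        - ∑ i ∈ s, exchangeTerm γ A hBB l s x₀ i := by
  induction s using Finset.induction_on generalizing x₀ with
  | empty => simp [show prodB hBB l ∅ = 1 from noncommProd_empty _ _]
  | @insert k t hk ih =>
    rw [coe_insert, Set.pairwise_insert] at hsep
    have hkt : ∀ i ∈ t, k ≠ i := fun i hi => (ne_of_mem_of_not_mem hi hk).symm
    have hk0 := hb0 k (mem_insert_self k t)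
    have hi0 : ∀ i ∈ t, sinh (l i - x₀) ≠ 0 := fun i hi => hb0 i (mem_insert_of_mem hi)
    have hterm_k : exchangeTerm γ A hBB l (insert k t) x₀ k
        = (cOverB γ (l k - x₀) * ∏ j ∈ t, aOverB γ (l j - l k)) •
            (B x₀ * prodB hBB l t * A (l k)) := by
      rw [exchangeTerm, erase_insert hk]
    calc A x₀ * prodB hBB l (insert k t)
        = aOverB γ (l k - x₀) • (B (l k) * (A x₀ * prodB hBB l t))
          - cOverB γ (l k - x₀) • (B x₀ * (A (l k) * prodB hBB l t)) := by
          rw [prodB_insert hBB l hk, ← mul_assoc, hAB _ _ hk0, sub_mul, smul_mul_assoc,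
            smul_mul_assoc, mul_assoc, mul_assoc]
      _ = _ := by
          rw [ih x₀ hi0 hsep.1, ih (l k) (fun j hj => (hsep.2 j hj (hkt j hj)).1) hsep.1,
            prod_insert hk, sum_insert hk, hterm_k, prodB_insert hBB l hk,
            sum_congr rfl fun i hi => exchangeTerm_insert γ A hBB l hk hi (hi0 i hi) hk0
              (hsep.2 i hi (hkt i hi)).2]
          simp only [mul_sub, smul_sub, mul_sum, smul_sum, sum_sub_distrib, mul_smul_comm,
            smul_smul, mul_assoc]
          abel

end Exchange

/-- Degree-`(n+1)` Yang–Baxter relation for `A`: if `A(x), B(x)` satisfy the two-point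
exchange relations of the Yang–Baxter algebra of the six-vertex model
(`a(x) = sinh(x+γ)`, `b(x) = sinh x`, `c(x) = sinh γ`), then
`A(x₀) B(λ₁)⋯B(λₙ) = (∏ⱼ a(λⱼ−x₀)/b(λⱼ−x₀)) B(λ₁)⋯B(λₙ) A(x₀)
  − Σᵢ (c(λᵢ−x₀)/b(λᵢ−x₀)) (∏_{j≠i} a(λⱼ−λᵢ)/b(λⱼ−λᵢ)) B(x₀) (∏_{j≠i} B(λⱼ)) A(λᵢ)`. -/
theorem yang_baxter_higher_degree_A {V : Type*} [AddCommGroup V] [Module ℂ V]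
    (γ : ℂ) (A B : ℂ → Module.End ℂ V)
    (hBB : ∀ x₁ x₂, Commute (B x₁) (B x₂))
    (hAB : ∀ x₁ x₂, Complex.sinh (x₂ - x₁) ≠ 0 →
      A x₁ * B x₂
        = (Complex.sinh (x₂ - x₁ + γ) / Complex.sinh (x₂ - x₁)) • (B x₂ * A x₁)
          - (Complex.sinh γ / Complex.sinh (x₂ - x₁)) • (B x₁ * A x₂))
    (n : ℕ) (x₀ : ℂ) (l : Fin n → ℂ)
    (hb0 : ∀ j, Complex.sinh (l j - x₀) ≠ 0)
    (hbij : ∀ i j, i ≠ j → Complex.sinh (l j - l i) ≠ 0) :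
    A x₀ * Finset.univ.noncommProd (fun j => B (l j)) (fun p _ q _ _ => hBB (l p) (l q))
      = (∏ j, Complex.sinh (l j - x₀ + γ) / Complex.sinh (l j - x₀)) •
          (Finset.univ.noncommProd (fun j => B (l j)) (fun p _ q _ _ => hBB (l p) (l q))
            * A x₀)
        - ∑ i, ((Complex.sinh γ / Complex.sinh (l i - x₀))
              * ∏ j ∈ Finset.univ.erase i,
                  Complex.sinh (l j - l i + γ) / Complex.sinh (l j - l i)) •
            (B x₀
              * (Finset.univ.erase i).noncommProd (fun j => B (l j))
                  (fun p _ q _ _ => hBB (l p) (l q))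
              * A (l i)) :=
  mul_prodB_eq_sub_sum_exchangeTerm γ A hBB l hAB univ x₀ (fun j _ => hb0 j)
    fun i _ j _ hij => hbij i j hij
end

section
/- Suppose operators D(x), B(x) satisfy D(x₁)B(x₂) = (a(x₁−x₂)/b(x₁−x₂)) B(x₂)D(x₁) − (c(x₁−x₂)/b(x₁−x₂)) B(x₁)D(x₂) and B(x₁)B(x₂) = B(x₂)B(x₁) for all distinct arguments. Then for distinct λ₀, ..., λₙ: D(λ₀)B(λ₁)···B(λₙ) = (∏_{j=1}^n a(λ₀−λⱼ)/b(λ₀−λⱼ)) B(λ₁)···B(λₙ)D(λ₀) − Σ_{i=1}^n (c(λ₀−λᵢ)/b(λ₀−λᵢ)) (∏_{j≠i} a(λᵢ−λⱼ)/b(λᵢ−λⱼ)) B(λ₀)(∏_{j≠i} B(λⱼ)) D(λᵢ). -/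
/-!
Induction on the set of `B`'s. Moving `D(x)` past the first factor `B(y)` gives
`α(x,y) B(y) D(x) - β(x,y) B(x) D(y)`, and the induction hypothesis applies to both `D(x)` and
`D(y)`. The coefficient of `B(x) ∏_{j ≠ i} B(l j) D(l i)` then comes out right because of
`α(x,y) β(x,z) - β(x,y) β(y,z) = β(x,z) α(z,y)`, which for the six-vertex weights is the
addition formula `sinh(u+γ) sinh w + sinh(γ-w) sinh u = sinh γ sinh(u+w)`.
-/

open Finset Complex

theorem Finset.noncommProd_insert_of_forall_commute {ι M : Type*} [Monoid M] [DecidableEq ι]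
    (f : ι → M) (hf : ∀ i j, Commute (f i) (f j)) {k : ι} {t : Finset ι} (hk : k ∉ t) :
    (insert k t).noncommProd f (fun p _ q _ _ => hf p q)
      = f k * t.noncommProd f (fun p _ q _ _ => hf p q) :=
  noncommProd_insert_of_notMem _ _ _ _ hk

section ExchangeRelation

variable {K A κ ι : Type*} [CommRing K] [Ring A] [Algebra K A] [DecidableEq ι]
  (α β : κ → κ → K) (R : κ → κ → Prop) (D B : κ → A) (hBB : ∀ x y, Commute (B x) (B y))
  (l : ι → κ)

local notation "∏ᴮ " s:max => noncommProd s (fun j => B (l j)) (fun p _ q _ _ => hBB (l p) (l q))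

theorem mul_noncommProd_eq_of_exchange
    (hDB : ∀ x y, R x y → D x * B y = α x y • (B y * D x) - β x y • (B x * D y))
    (hcoef : ∀ x y z, R x y → R y z → R x z → α x y * β x z - β x y * β y z = β x z * α z y)
    (s : Finset ι) (x : κ) (hx : ∀ j ∈ s, R x (l j))
    (hl : ∀ i ∈ s, ∀ j ∈ s, i ≠ j → R (l i) (l j)) :
    D x * ∏ᴮ s
      = (∏ j ∈ s, α x (l j)) • (∏ᴮ s * D x)
        - ∑ i ∈ s, (β x (l i) * ∏ j ∈ s.erase i, α (l i) (l j)) •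
            (B x * ∏ᴮ (s.erase i) * D (l i)) := by
  induction s using Finset.induction_on generalizing x with
  | empty =>
    simp only [prod_empty, one_smul, sum_empty, sub_zero]
    exact (Commute.one_right (D x)).eq
  | insert k t hk ih =>
    have hxk := hx k (mem_insert_self k t)
    have hkt : ∀ j ∈ t, R (l k) (l j) := fun j hj =>
      hl k (mem_insert_self k t) j (mem_insert_of_mem hj) (ne_of_mem_of_not_mem hj hk).symm
    have hxt : ∀ j ∈ t, R x (l j) := fun j hj => hx j (mem_insert_of_mem hj)
    have hlt : ∀ i ∈ t, ∀ j ∈ t, i ≠ j → R (l i) (l j) := fun i hi j hj =>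
      hl i (mem_insert_of_mem hi) j (mem_insert_of_mem hj)
    rw [noncommProd_insert_of_forall_commute _ (fun p q => hBB (l p) (l q)) hk, ← mul_assoc,
      hDB x (l k) hxk, sub_mul, smul_mul_assoc, smul_mul_assoc, mul_assoc, mul_assoc,
      ih x hxt hlt, ih (l k) hkt hlt, sum_insert hk, prod_insert hk, erase_insert hk]
    have hterm : ∀ i ∈ t, (β x (l i) * ∏ j ∈ (insert k t).erase i, α (l i) (l j)) •
          (B x * ∏ᴮ ((insert k t).erase i) * D (l i))
        = α x (l k) • (B (l k) * ((β x (l i) * ∏ j ∈ t.erase i, α (l i) (l j)) •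
            (B x * ∏ᴮ (t.erase i) * D (l i))))
          - β x (l k) • (B x * ((β (l k) (l i) * ∏ j ∈ t.erase i, α (l i) (l j)) •
            (B (l k) * ∏ᴮ (t.erase i) * D (l i)))) := by
      intro i hi
      have hki : k ≠ i := (ne_of_mem_of_not_mem hi hk).symm
      have hkei : k ∉ t.erase i := fun h => hk (mem_of_mem_erase h)
      rw [erase_insert_of_ne hki, prod_insert hkei,
        noncommProd_insert_of_forall_commute _ (fun p q => hBB (l p) (l q)) hkei]
      simp only [mul_smul_comm, smul_smul, mul_assoc, (hBB (l k) x).left_comm, ← sub_smul]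
      congr 1
      linear_combination (-∏ j ∈ t.erase i, α (l i) (l j)) *
        hcoef x (l k) (l i) hxk (hkt i hi) (hxt i hi)
    rw [sum_congr rfl hterm, sum_sub_distrib]
    simp only [mul_sub, smul_sub, mul_sum, smul_sum, mul_smul_comm, smul_smul, mul_assoc]
    abel

end ExchangeRelation

theorem sinh_exchange_coeff (γ x y z : ℂ) (hxy : sinh (x - y) ≠ 0) (hyz : sinh (y - z) ≠ 0)
    (hxz : sinh (x - z) ≠ 0) :
    sinh (x - y + γ) / sinh (x - y) * (sinh γ / sinh (x - z))
        - sinh γ / sinh (x - y) * (sinh γ / sinh (y - z))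
      = sinh γ / sinh (x - z) * (sinh (z - y + γ) / sinh (z - y)) := by
  rw [show x - z = (x - y) + (y - z) by ring] at hxz ⊢
  rw [show z - y = -(y - z) by ring]
  have hzy : sinh (-(y - z)) ≠ 0 := by rwa [sinh_neg, neg_ne_zero]
  field_simp
  simp only [sinh_add, sinh_neg, cosh_neg]
  ring

/-- Degree-`(n+1)` Yang–Baxter relation for `D`: if `D(x), B(x)` satisfy the two-point
exchange relations of the Yang–Baxter algebra of the six-vertex model
(`a(x) = sinh(x+γ)`, `b(x) = sinh x`, `c(x) = sinh γ`), then
`D(λ₀) B(λ₁)⋯B(λₙ) = (∏ⱼ a(λ₀−λⱼ)/b(λ₀−λⱼ)) B(λ₁)⋯B(λₙ) D(λ₀)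
  − Σᵢ (c(λ₀−λᵢ)/b(λ₀−λᵢ)) (∏_{j≠i} a(λᵢ−λⱼ)/b(λᵢ−λⱼ)) B(λ₀) (∏_{j≠i} B(λⱼ)) D(λᵢ)`. -/
theorem yang_baxter_higher_degree_D {V : Type*} [AddCommGroup V] [Module ℂ V]
    (γ : ℂ) (D B : ℂ → Module.End ℂ V)
    (hBB : ∀ x₁ x₂, Commute (B x₁) (B x₂))
    (hDB : ∀ x₁ x₂, Complex.sinh (x₁ - x₂) ≠ 0 →
      D x₁ * B x₂
        = (Complex.sinh (x₁ - x₂ + γ) / Complex.sinh (x₁ - x₂)) • (B x₂ * D x₁)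
          - (Complex.sinh γ / Complex.sinh (x₁ - x₂)) • (B x₁ * D x₂))
    (n : ℕ) (x₀ : ℂ) (l : Fin n → ℂ)
    (hb0 : ∀ j, Complex.sinh (x₀ - l j) ≠ 0)
    (hbij : ∀ i j, i ≠ j → Complex.sinh (l i - l j) ≠ 0) :
    D x₀ * Finset.univ.noncommProd (fun j => B (l j)) (fun p _ q _ _ => hBB (l p) (l q))
      = (∏ j, Complex.sinh (x₀ - l j + γ) / Complex.sinh (x₀ - l j)) •
          (Finset.univ.noncommProd (fun j => B (l j)) (fun p _ q _ _ => hBB (l p) (l q))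
            * D x₀)
        - ∑ i, ((Complex.sinh γ / Complex.sinh (x₀ - l i))
              * ∏ j ∈ Finset.univ.erase i,
                  Complex.sinh (l i - l j + γ) / Complex.sinh (l i - l j)) •
            (B x₀
              * (Finset.univ.erase i).noncommProd (fun j => B (l j))
                  (fun p _ q _ _ => hBB (l p) (l q))
              * D (l i)) := by
  exact mul_noncommProd_eq_of_exchange (fun x y => sinh (x - y + γ) / sinh (x - y))
    (fun x y => sinh γ / sinh (x - y)) (fun x y => sinh (x - y) ≠ 0) D B hBB l hDB
    (sinh_exchange_coeff γ) univ x₀ (fun j _ => hb0 j)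
    (fun i _ j _ => hbij i j)
end

section
/- Let B, A be operator-valued functions on ℂ satisfying the Yang–Baxter exchange relations, let |0⟩ be a vector with A(λ)|0⟩ = α(λ)|0⟩ and D(λ)|0⟩ = δ(λ)|0⟩ for scalar functions α, δ, and let ⟨Λ| be a left eigenvector of T(λ) = A(λ) + D(λ) with eigenvalue Λ(λ). Define F_n(λ₁,...,λₙ) = ⟨Λ| B(λ₁)···B(λₙ) |0⟩. Then F_n satisfies the functional equation J₀·F_n(λ₁,...,λₙ) − Σ_{i=1}^n K_{λᵢ}·F_n(λ₀, λ₁,...,λ̂ᵢ,...,λₙ) = Λ(λ₀)·F_n(λ₁,...,λₙ), where J₀ = α(λ₀)∏ⱼ a(λⱼ−λ₀)/b(λⱼ−λ₀) + δ(λ₀)∏ⱼ a(λ₀−λⱼ)/b(λ₀−λⱼ) and K_{λᵢ} = α(λᵢ)(c(λᵢ−λ₀)/b(λᵢ−λ₀))∏_{j≠i} a(λⱼ−λᵢ)/b(λⱼ−λᵢ) + δ(λᵢ)(c(λ₀−λᵢ)/b(λ₀−λᵢ))∏_{j≠i} a(λᵢ−λⱼ)/b(λᵢ−λⱼ), and λ̂ᵢ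 denotes omission of λᵢ. -/
/-!
Write `E x * B y = r x y • (B y * E x) - s x y • (B x * E y)` for both `E = A` and `E = D`.
Pushing `E x` through `B(λ₁)⋯B(λₙ)` one factor at a time (induction on the set of indices)
produces one "wanted" term `(∏ⱼ r x λⱼ) • B(λ₁)⋯B(λₙ) E x` and, for each `i`, "unwanted" terms
ending in `E λᵢ`. These collapse to the single term
`s x λᵢ ∏_{j ≠ i} r λᵢ λⱼ • B x ∏_{j ≠ i} B λⱼ E λᵢ` because of the consistency identity
`r x u * s x v - s x u * s u v = s x v * r v u`, which is what one gets by comparing the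
coefficient of `B u B x E v` in `E x B u B v` and in `E x B v B u`; for the trigonometric weights
it is an addition-formula identity for `sinh`. Applying the result to `|0⟩` turns the `E λᵢ` into
scalars, and pairing the sum of the `A` and `D` formulas with `⟨Λ|` gives `Λ(λ₀) Fₙ`.
-/

open Finset Complex

section Exchange

variable {K R X ι : Type*} [CommRing K] [DecidableEq ι] {r s : X → X → K} {S : Set X}

/-- `Finset.noncommProd` with its commutativity proof fixed, so that the set can be rewritten. -/
def commuteProd [Monoid R] (B : X → R) (hBB : ∀ x y, Commute (B x) (B y)) (l : ι → X)
    (t : Finset ι) : R :=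
  t.noncommProd (fun j => B (l j)) fun p _ q _ _ => hBB (l p) (l q)

omit [DecidableEq ι] in
@[simp]
theorem commuteProd_empty [Monoid R] {B : X → R} (hBB : ∀ x y, Commute (B x) (B y))
    (l : ι → X) :
    commuteProd B hBB l ∅ = 1 :=
  noncommProd_empty _ _

theorem commuteProd_insert [Monoid R] {B : X → R} (hBB : ∀ x y, Commute (B x) (B y))
    (l : ι → X) {t : Finset ι} {k : ι} (hk : k ∉ t) :
    commuteProd B hBB l (insert k t) = B (l k) * commuteProd B hBB l t :=
  noncommProd_insert_of_notMem _ _ _ _ hk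

theorem mul_commuteProd_of_exchange [Ring R] [Algebra K R] {B E : X → R}
    (hBB : ∀ x y, Commute (B x) (B y))
    (hEB : ∀ x ∈ S, ∀ y ∈ S, x ≠ y → E x * B y = r x y • (B y * E x) - s x y • (B x * E y))
    (hrs : ∀ x ∈ S, ∀ u ∈ S, ∀ v ∈ S, x ≠ u → x ≠ v → u ≠ v →
      r x u * s x v - s x u * s u v = s x v * r v u)
    {l : ι → X} (hl : Function.Injective l) (hlS : ∀ i, l i ∈ S) (t : Finset ι)
    {x : X} (hx : x ∈ S) (hxl : ∀ i ∈ t, l i ≠ x) :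
    E x * commuteProd B hBB l t
      = (∏ j ∈ t, r x (l j)) • (commuteProd B hBB l t * E x)
        - ∑ i ∈ t, (s x (l i) * ∏ j ∈ t.erase i, r (l i) (l j))
          • (B x * commuteProd B hBB l (t.erase i) * E (l i)) := by
  induction t using Finset.induction_on generalizing x with
  | empty => simp
  | insert k t hk ih =>
    have hne : ∀ i ∈ t, l i ≠ l k := fun i hi h => hk (hl h ▸ hi)
    rw [commuteProd_insert hBB l hk, ← mul_assoc,
      hEB x hx (l k) (hlS k) (hxl k (mem_insert_self k t)).symm, sub_mul, smul_mul_assoc,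
      smul_mul_assoc, mul_assoc, mul_assoc, ih hx fun i hi => hxl i (mem_insert_of_mem hi),
      ih (hlS k) hne, prod_insert hk, sum_insert hk, erase_insert hk]
    have hswap : ∀ z, B x * (B (l k) * z) = B (l k) * (B x * z) := fun z => by
      rw [← mul_assoc, (hBB x (l k)).eq, mul_assoc]
    have hterm : ∀ i ∈ t,
        (s x (l i) * ∏ j ∈ (insert k t).erase i, r (l i) (l j))
            • (B x * commuteProd B hBB l ((insert k t).erase i) * E (l i))
          = (r x (l k) * (s x (l i) * ∏ j ∈ t.erase i, r (l i) (l j))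
              - s x (l k) * (s (l k) (l i) * ∏ j ∈ t.erase i, r (l i) (l j)))
            • (B (l k) * (B x * commuteProd B hBB l (t.erase i) * E (l i))) := by
      intro i hi
      have hki : k ∉ t.erase i := fun h => hk (mem_of_mem_erase h)
      rw [erase_insert_of_ne (ne_of_mem_of_not_mem hi hk).symm, commuteProd_insert hBB l hki,
        prod_insert hki]
      simp only [mul_assoc, hswap]
      congr 1
      linear_combination (-∏ j ∈ t.erase i, r (l i) (l j))
        * hrs x hx (l k) (hlS k) (l i) (hlS i) (hxl k (mem_insert_self k t)).symm
          (hxl i (mem_insert_of_mem hi)).symm (hne i hi).symm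
    rw [sum_congr rfl hterm]
    simp only [mul_sub, mul_smul_comm, Finset.mul_sum, smul_sub, Finset.smul_sum, smul_smul,
      sub_smul, sum_sub_distrib, mul_assoc, hswap]
    abel

theorem commuteProd_apply_of_exchange {V : Type*} [AddCommGroup V] [Module K V]
    {B E : X → Module.End K V} (hBB : ∀ x y, Commute (B x) (B y))
    (hEB : ∀ x ∈ S, ∀ y ∈ S, x ≠ y → E x * B y = r x y • (B y * E x) - s x y • (B x * E y))
    (hrs : ∀ x ∈ S, ∀ u ∈ S, ∀ v ∈ S, x ≠ u → x ≠ v → u ≠ v →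
      r x u * s x v - s x u * s u v = s x v * r v u)
    {e : X → K} {v₀ : V} (hE : ∀ y, E y v₀ = e y • v₀)
    {l : ι → X} (hl : Function.Injective l) (hlS : ∀ i, l i ∈ S) (t : Finset ι)
    {x : X} (hx : x ∈ S) (hxl : ∀ i ∈ t, l i ≠ x) :
    E x (commuteProd B hBB l t v₀)
      = (e x * ∏ j ∈ t, r x (l j)) • commuteProd B hBB l t v₀
        - ∑ i ∈ t, (e (l i) * s x (l i) * ∏ j ∈ t.erase i, r (l i) (l j))
          • (B x * commuteProd B hBB l (t.erase i)) v₀ := by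
  rw [← Module.End.mul_apply, mul_commuteProd_of_exchange hBB hEB hrs hl hlS t hx hxl]
  simp only [LinearMap.sub_apply, LinearMap.smul_apply, LinearMap.sum_apply, Module.End.mul_apply,
    hE, map_smul, smul_smul]
  congr 1
  · rw [mul_comm]
  · exact sum_congr rfl fun i _ => by congr 1; ring

end Exchange

theorem sinh_exchange_consistency (γ a b : ℂ) (ha : sinh a ≠ 0) (hb : sinh b ≠ 0)
    (hab : sinh (b - a) ≠ 0) :
    sinh (a + γ) / sinh a * (sinh γ / sinh b) - sinh γ / sinh a * (sinh γ / sinh (b - a))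
      = sinh γ / sinh b * (sinh (a - b + γ) / sinh (a - b)) := by
  rw [show a - b = -(b - a) by ring, sinh_neg]
  field_simp
  rw [sinh_add, sinh_add, sinh_neg, sinh_sub, cosh_neg, cosh_sub]
  linear_combination sinh γ ^ 2 * sinh b * cosh_sq_sub_sinh_sq a

/-- Theorem 1 of the paper (functional equation of the algebraic-functional approach).
With `a(x) = sinh(x+γ)`, `b(x) = sinh x`, `c(x) = sinh γ`: if `A, B, D` satisfy the
Yang–Baxter exchange relations, `|0⟩` satisfies `A(λ)|0⟩ = α(λ)|0⟩`, `D(λ)|0⟩ = δ(λ)|0⟩`,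
and `⟨Λ|` is a left eigenvector of `T(λ) = A(λ) + D(λ)` with eigenvalue `Λ(λ)`, then
`F_n(λ₁,…,λₙ) = ⟨Λ|B(λ₁)⋯B(λₙ)|0⟩` satisfies
`J₀ F_n(λ₁,…,λₙ) − Σᵢ K_{λᵢ} F_n(λ₀,…,λ̂ᵢ,…,λₙ) = Λ(λ₀) F_n(λ₁,…,λₙ)` with the
coefficients `J₀`, `K_{λᵢ}` of the paper. -/
theorem functional_equation_transfer_matrix
    {V : Type*} [AddCommGroup V] [Module ℂ V]
    (γ : ℂ) (A B D : ℂ → Module.End ℂ V)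
    (α δ Λ : ℂ → ℂ) (v₀ : V) (ℓ : V →ₗ[ℂ] ℂ)
    (hBB : ∀ x₁ x₂, Commute (B x₁) (B x₂))
    (hAB : ∀ x₁ x₂, Complex.sinh (x₂ - x₁) ≠ 0 →
      A x₁ * B x₂
        = (Complex.sinh (x₂ - x₁ + γ) / Complex.sinh (x₂ - x₁)) • (B x₂ * A x₁)
          - (Complex.sinh γ / Complex.sinh (x₂ - x₁)) • (B x₁ * A x₂))
    (hDB : ∀ x₁ x₂, Complex.sinh (x₁ - x₂) ≠ 0 →
      D x₁ * B x₂
        = (Complex.sinh (x₁ - x₂ + γ) / Complex.sinh (x₁ - x₂)) • (B x₂ * D x₁)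
          - (Complex.sinh γ / Complex.sinh (x₁ - x₂)) • (B x₁ * D x₂))
    (hA0 : ∀ x, A x v₀ = α x • v₀) (hD0 : ∀ x, D x v₀ = δ x • v₀)
    (hEig : ∀ x (w : V), ℓ ((A x + D x) w) = Λ x * ℓ w)
    (n : ℕ) (x₀ : ℂ) (l : Fin n → ℂ)
    (hb0 : ∀ j, Complex.sinh (l j - x₀) ≠ 0)
    (hb0' : ∀ j, Complex.sinh (x₀ - l j) ≠ 0)
    (hbij : ∀ i j, i ≠ j → Complex.sinh (l j - l i) ≠ 0) :
    (α x₀ * ∏ j, Complex.sinh (l j - x₀ + γ) / Complex.sinh (l j - x₀)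
        + δ x₀ * ∏ j, Complex.sinh (x₀ - l j + γ) / Complex.sinh (x₀ - l j))
      * ℓ ((Finset.univ.noncommProd (fun j => B (l j))
            (fun p _ q _ _ => hBB (l p) (l q))) v₀)
      - ∑ i,
        (α (l i) * (Complex.sinh γ / Complex.sinh (l i - x₀))
            * ∏ j ∈ Finset.univ.erase i,
                Complex.sinh (l j - l i + γ) / Complex.sinh (l j - l i)
          + δ (l i) * (Complex.sinh γ / Complex.sinh (x₀ - l i))
            * ∏ j ∈ Finset.univ.erase i,
                Complex.sinh (l i - l j + γ) / Complex.sinh (l i - l j))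
          * ℓ ((B x₀
              * (Finset.univ.erase i).noncommProd (fun j => B (l j))
                  (fun p _ q _ _ => hBB (l p) (l q))) v₀)
      = Λ x₀
        * ℓ ((Finset.univ.noncommProd (fun j => B (l j))
            (fun p _ q _ _ => hBB (l p) (l q))) v₀) := by
  set S : Set ℂ := insert x₀ (Set.range l)
  have hS : ∀ x ∈ S, ∀ y ∈ S, x ≠ y → sinh (x - y) ≠ 0 := by
    rintro x (rfl | ⟨i, rfl⟩) y (rfl | ⟨j, rfl⟩) hxy
    · exact (hxy rfl).elim
    · exact hb0' j
    · exact hb0 i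
    · exact hbij j i fun h => hxy (h ▸ rfl)
  have hl : Function.Injective l := fun i j h =>
    by_contra fun hij => hbij i j hij (by rw [h, sub_self, sinh_zero])
  have hlS : ∀ i, l i ∈ S := fun i => Or.inr ⟨i, rfl⟩
  have hx₀ : x₀ ∈ S := Or.inl rfl
  have hxl : ∀ i ∈ univ, l i ≠ x₀ := fun i _ h => hb0 i (by rw [h, sub_self, sinh_zero])
  have hA := commuteProd_apply_of_exchange (r := fun x y => sinh (y - x + γ) / sinh (y - x))
    (s := fun x y => sinh γ / sinh (y - x)) hBB
    (fun x hx y hy hxy => hAB x y (hS y hy x hx hxy.symm))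
    (fun x hx u hu v hv hxu hxv huv => by
      simpa only [sub_sub_sub_cancel_right] using
        sinh_exchange_consistency γ (u - x) (v - x) (hS u hu x hx hxu.symm)
          (hS v hv x hx hxv.symm) (by rw [sub_sub_sub_cancel_right]; exact hS v hv u hu huv.symm))
    hA0 hl hlS univ hx₀ hxl
  have hD := commuteProd_apply_of_exchange (r := fun x y => sinh (x - y + γ) / sinh (x - y))
    (s := fun x y => sinh γ / sinh (x - y)) hBB
    (fun x hx y hy hxy => hDB x y (hS x hx y hy hxy))
    (fun x hx u hu v hv hxu hxv huv => by
      simpa only [sub_sub_sub_cancel_left] using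
        sinh_exchange_consistency γ (x - u) (x - v) (hS x hx u hu hxu)
          (hS x hx v hv hxv) (by rw [sub_sub_sub_cancel_left]; exact hS u hu v hv huv))
    hD0 hl hlS univ hx₀ hxl
  have hT := hEig x₀ (commuteProd B hBB l univ v₀)
  rw [LinearMap.add_apply, map_add, hA, hD] at hT
  simp only [commuteProd] at hT
  rw [← hT]
  simp only [map_sub, map_sum, map_smul, smul_eq_mul, add_mul, sum_add_distrib]
  ring
end
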